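/- arXiv:2412.02174 — 5 statements merged into one kernel-verified Lean document; each statement's English description precedes it below -/
import Mathlib

section
/- Let A, B, C be three points in the plane with B not on line AC, and let B₁ be the orthogonal projection of B onto line AC. If B₁ lies between A and C (inclusive), then the reflections of B across the midpoint X of segment AB and across the midpoint Y of segment BC, together with A and C, form a rectangle with base AC whose area equals the area of triangle ABC. -/
/-!
The midline `XY` is parallel to `AC` at half the height of `B`, so the feet `A'`, `C'` of the
perpendiculars from `A`, `C` to it satisfy `A' - A = C' - C = (B - B₁) / 2`: the rectangle has base
`AC` and half the height of the triangle, hence the same area.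

For the areas, the unit square is the union of the standard triangle and its point reflection
through the square's centre, which meet along a diagonal; so a triangle spanned by `p, q` has half
the area of the parallelogram spanned by `p, q`, which is the absolute value of a determinant.
-/

open EuclideanGeometry MeasureTheory

noncomputable section

abbrev Plane := EuclideanSpace ℝ (Fin 2)

open Pointwise Module

section Midline

variable {V : Type*} [NormedAddCommGroup V] [InnerProductSpace ℝ V]

theorem eq_of_sub_mem_of_mem_orthogonal {K : Submodule ℝ V} {v w : V} (hK : w - v ∈ K)
    (hv : v ∈ Kᗮ) (hw : w ∈ Kᗮ) : w = v :=
  sub_eq_zero.mp <| Submodule.disjoint_def.mp K.orthogonal_disjoint _ hK (Kᗮ.sub_mem hw hv)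

theorem sub_eq_half_of_mem_midline {A B C B₁ P Q : V}
    (hB₁ : B₁ ∈ line[ℝ, A, C]) (hB₁perp : inner ℝ (B - B₁) (C - A) = (0 : ℝ))
    (hP : P ∈ line[ℝ, midpoint ℝ A B, midpoint ℝ B C]) (hQ : Q ∈ line[ℝ, A, C])
    (hPQ : inner ℝ (P - Q) (C - A) = (0 : ℝ)) :
    P - Q = (2 : ℝ)⁻¹ • (B - B₁) := by
  obtain ⟨t, ht⟩ := mem_affineSpan_pair_iff_exists_lineMap_eq.mp hB₁
  obtain ⟨s, hs⟩ := mem_affineSpan_pair_iff_exists_lineMap_eq.mp hP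
  obtain ⟨q, hq⟩ := mem_affineSpan_pair_iff_exists_lineMap_eq.mp hQ
  refine eq_of_sub_mem_of_mem_orthogonal (K := ℝ ∙ (C - A)) ?_ ?_ ?_
  · refine Submodule.mem_span_singleton.mpr ⟨s / 2 - q + t / 2, ?_⟩
    simp only [← ht, ← hs, ← hq, AffineMap.lineMap_apply_module, midpoint_eq_smul_add,
      invOf_eq_inv]
    module
  · exact Submodule.smul_mem _ _ (Submodule.mem_orthogonal_singleton_iff_inner_left.mpr hB₁perp)
  · exact Submodule.mem_orthogonal_singleton_iff_inner_left.mpr hPQ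

end Midline

section Area

local notation "e" => EuclideanSpace.basisFun (Fin 2) ℝ

def stdTriangle : Set Plane := {x | 0 ≤ x 0 ∧ 0 ≤ x 1 ∧ x 0 + x 1 ≤ 1}

theorem convexHull_stdTriangle : convexHull ℝ {0, e 0, e 1} = stdTriangle := by
  apply le_antisymm
  · refine convexHull_min (by simp [Set.insert_subset_iff, stdTriangle]) ?_
    rintro x ⟨hx0, hx1, hx⟩ y ⟨hy0, hy1, hy⟩ a b ha hb hab
    simp only [stdTriangle, Set.mem_ofPred_eq, PiLp.add_apply, PiLp.smul_apply, smul_eq_mul]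
    exact ⟨by positivity, by positivity, by nlinarith⟩
  · rintro x ⟨h0, h1, h01⟩
    have hmem := (convex_convexHull ℝ ({0, e 0, e 1} : Set Plane)).sum_mem
      (w := ![1 - x 0 - x 1, x 0, x 1]) (z := ![0, e 0, e 1]) (t := Finset.univ)
      (fun i _ => by fin_cases i <;> simp [h0, h1]; linarith)
      (by simp [Fin.sum_univ_three]; ring)
      (fun i _ => subset_convexHull ℝ _ (by fin_cases i <;> simp))
    convert hmem
    ext i; fin_cases i <;> simp [Fin.sum_univ_three]

theorem mem_parallelepiped_basisFun {x : Plane} :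
    x ∈ parallelepiped e ↔ (0 ≤ x 0 ∧ x 0 ≤ 1) ∧ (0 ≤ x 1 ∧ x 1 ≤ 1) := by
  rw [← (e).coe_toBasis, parallelepiped_basis_eq]
  simp [Fin.forall_fin_two]

theorem mem_reflect_stdTriangle {x : Plane} :
    x ∈ (e 0 + e 1) +ᵥ -stdTriangle ↔ x 0 ≤ 1 ∧ x 1 ≤ 1 ∧ 1 ≤ x 0 + x 1 := by
  rw [Set.mem_vadd_set_iff_neg_vadd_mem, Set.mem_neg]
  simp only [stdTriangle, Set.mem_ofPred_eq, vadd_eq_add, neg_add, neg_neg, PiLp.add_apply,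
    PiLp.neg_apply, EuclideanSpace.basisFun_apply, PiLp.single_apply]
  norm_num
  grind

theorem reflect_stdTriangle_union :
    ((e 0 + e 1) +ᵥ -stdTriangle) ∪ stdTriangle = parallelepiped e := by
  ext x
  rw [Set.mem_union, mem_reflect_stdTriangle, mem_parallelepiped_basisFun]
  constructor
  · rintro (⟨h1, h2, h3⟩ | ⟨h1, h2, h3⟩) <;> refine ⟨⟨?_, ?_⟩, ?_, ?_⟩ <;> linarith
  · rintro ⟨⟨h1, h2⟩, h3, h4⟩
    rcases le_total (x 0 + x 1) 1 with h | h
    · exact Or.inr ⟨h1, h3, h⟩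
    · exact Or.inl ⟨h2, h4, h⟩

theorem volume_reflect_stdTriangle_inter :
    volume (((e 0 + e 1) +ᵥ -stdTriangle) ∩ stdTriangle) = 0 := by
  refine measure_mono_null (t := line[ℝ, e 0, e 1]) ?_ (Measure.addHaar_affineSubspace _ _ ?_)
  · rintro x ⟨hx', hx⟩
    rw [mem_reflect_stdTriangle] at hx'
    refine mem_affineSpan_pair_iff_exists_lineMap_eq.mpr ⟨x 1, ?_⟩
    ext i; fin_cases i <;> simp [AffineMap.lineMap_apply_module]; linarith [hx.2.2, hx'.2.2]
  · intro htop
    obtain ⟨r, hr⟩ := mem_affineSpan_pair_iff_exists_lineMap_eq.mp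
      (htop ▸ AffineSubspace.mem_top ℝ _ (0 : Plane))
    simpa [AffineMap.lineMap_apply_module] using congrArg (fun x : Plane => x 0 + x 1) hr

theorem two_mul_volume_stdTriangle : 2 * volume stdTriangle = volume (parallelepiped e) := by
  have hmeas : MeasurableSet stdTriangle := by
    rw [← convexHull_stdTriangle]
    exact ((Set.toFinite _).isCompact_convexHull ℝ).isClosed.measurableSet
  have key := measure_union_add_inter (μ := volume) ((e 0 + e 1) +ᵥ -stdTriangle) hmeas
  rw [reflect_stdTriangle_union, volume_reflect_stdTriangle_inter, add_zero, measure_vadd,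
    Measure.measure_neg] at key
  rw [key, two_mul]

theorem two_mul_volume_convexHull_triangle (p q : Plane) :
    2 * volume (convexHull ℝ {0, p, q}) = volume (parallelepiped ![p, q]) := by
  set f := (e).toBasis.constr ℝ ![p, q]
  have hf : ⇑f ∘ e = ![p, q] := by
    ext1 i; rw [Function.comp_apply, ← OrthonormalBasis.coe_toBasis, Basis.constr_basis]
  have hT : convexHull ℝ {0, p, q} = f '' stdTriangle := by
    rw [← convexHull_stdTriangle, LinearMap.image_convexHull, Set.image_insert_eq,
      Set.image_pair, map_zero, ← Function.comp_apply (f := f), ← Function.comp_apply (f := f)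
      (g := e), hf]
    rfl
  rw [hT, ← hf, ← image_parallelepiped, Measure.addHaar_image_linearMap,
    Measure.addHaar_image_linearMap, ← two_mul_volume_stdTriangle, mul_left_comm]

theorem volume_parallelepiped_fin_two (p q : Plane) :
    volume (parallelepiped ![p, q]) = ENNReal.ofReal |p 0 * q 1 - p 1 * q 0| := by
  rw [← (e).addHaar_eq_volume, Measure.addHaar_parallelepiped]
  simp [Basis.det_apply, Matrix.det_fin_two, Basis.toMatrix_apply, mul_comm]

end Area

theorem volume_convexHull_triangle (A B C : Plane) :
    volume (convexHull ℝ {A, B, C}) =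
      ENNReal.ofReal |(B - A) 0 * (C - A) 1 - (B - A) 1 * (C - A) 0| / 2 := by
  have h : ({A, B, C} : Set Plane) = A +ᵥ ({0, B - A, C - A} : Set Plane) := by
    simp [Set.vadd_set_insert]
  rw [h, convexHull_vadd, measure_vadd, ← volume_parallelepiped_fin_two,
    ← two_mul_volume_convexHull_triangle, mul_div_assoc,
    ENNReal.mul_div_cancel two_ne_zero ENNReal.ofNat_ne_top]

theorem volume_convexHull_parallelogram (A u v : Plane) :
    volume (convexHull ℝ {A, A + u, A + u + v, A + v}) =
      ENNReal.ofReal |u 0 * v 1 - u 1 * v 0| := by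
  have h : ({A, A + u, A + u + v, A + v} : Set Plane) = A +ᵥ ∑ i, ({0, ![u, v] i} : Set Plane) := by
    rw [Fin.sum_univ_two, ← Set.image2_add]
    simp only [Matrix.cons_val_zero, Matrix.cons_val_one, Set.image2_insert_left,
      Set.image2_singleton_left, Set.image_insert_eq, Set.image_singleton, Set.vadd_set_insert,
      Set.vadd_set_singleton, Set.vadd_set_union, vadd_eq_add, zero_add, add_zero, add_assoc]
    ext x; simp only [Set.mem_insert_iff, Set.mem_singleton_iff, Set.mem_union]; tauto
  rw [h, convexHull_vadd, measure_vadd, ← parallelepiped_eq_convexHull,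
    volume_parallelepiped_fin_two]

theorem stmt_0_general (A B C B₁ A' C' : Plane)
    (hB₁mem : B₁ ∈ affineSpan ℝ ({A, C} : Set Plane))
    (hB₁perp : inner ℝ (B - B₁) (C - A) = (0 : ℝ))
    (hA'mem : A' ∈ affineSpan ℝ ({midpoint ℝ A B, midpoint ℝ B C} : Set Plane))
    (hA'perp : inner ℝ (A' - A) (C - A) = (0 : ℝ))
    (hC'mem : C' ∈ affineSpan ℝ ({midpoint ℝ A B, midpoint ℝ B C} : Set Plane))
    (hC'perp : inner ℝ (C' - C) (C - A) = (0 : ℝ)) :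
    C' - C = A' - A ∧
      volume (convexHull ℝ ({A, A', C', C} : Set Plane)) =
        volume (convexHull ℝ ({A, B, C} : Set Plane)) := by
  have hA' := sub_eq_half_of_mem_midline hB₁mem hB₁perp hA'mem
    (left_mem_affineSpan_pair ℝ A C) hA'perp
  have hC' := sub_eq_half_of_mem_midline hB₁mem hB₁perp hC'mem
    (right_mem_affineSpan_pair ℝ A C) hC'perp
  have hCA' : C' - C = A' - A := hC'.trans hA'.symm
  refine ⟨hCA', ?_⟩
  obtain ⟨t, ht⟩ := mem_affineSpan_pair_iff_exists_lineMap_eq.mp hB₁mem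
  set v := A' - A
  set a := C - A
  have hBA : B - A = t • a + (2 : ℝ) • v := by
    rw [hA', ← ht, AffineMap.lineMap_apply_module]; module
  have hvertices : ({A, A', C', C} : Set Plane) = {A, A + v, A + v + a, A + a} := by
    rw [sub_eq_iff_eq_add'.mp hCA']
    simp only [v, a, add_sub_cancel, add_sub_left_comm C A' A]
  have hdet : (B - A) 0 * a 1 - (B - A) 1 * a 0 = 2 * (v 0 * a 1 - v 1 * a 0) := by
    rw [hBA]; simp only [PiLp.add_apply, PiLp.smul_apply, smul_eq_mul]; ring
  rw [hvertices, volume_convexHull_parallelogram, volume_convexHull_triangle, hdet, abs_mul,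
    abs_two, ENNReal.ofReal_mul zero_le_two, ENNReal.ofReal_ofNat, mul_div_assoc,
    ENNReal.mul_div_cancel two_ne_zero ENNReal.ofNat_ne_top]

theorem stmt_0 (A B C B₁ A' C' : Plane)
    (hB : B ∉ affineSpan ℝ ({A, C} : Set Plane))
    (hB₁mem : B₁ ∈ affineSpan ℝ ({A, C} : Set Plane))
    (hB₁perp : inner ℝ (B - B₁) (C - A) = (0 : ℝ))
    (hbtw : Wbtw ℝ A B₁ C)
    (hA'mem : A' ∈ affineSpan ℝ ({midpoint ℝ A B, midpoint ℝ B C} : Set Plane))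
    (hA'perp : inner ℝ (A' - A) (C - A) = (0 : ℝ))
    (hC'mem : C' ∈ affineSpan ℝ ({midpoint ℝ A B, midpoint ℝ B C} : Set Plane))
    (hC'perp : inner ℝ (C' - C) (C - A) = (0 : ℝ)) :
    C' - C = A' - A ∧
      volume (convexHull ℝ ({A, A', C', C} : Set Plane)) =
        volume (convexHull ℝ ({A, B, C} : Set Plane)) :=
  stmt_0_general A B C B₁ A' C' hB₁mem hB₁perp hA'mem hA'perp hC'mem hC'perp
end
end

section
/- Let A, B, C be points in the plane with B not on line AC, and let B' = A + C - B (so that ABCB' is a parallelogram). If a point Z lies in the interior of triangle ACB', then the angle ∠(A, Z, C) is strictly larger than the angle ∠(A, B, C). -/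
/-!
Write `B' = A + C - B`; the point reflection through the midpoint of `AC` swaps `A` and `C` and
sends `B` to `B'`, so `∠ A B C = ∠ A B' C`. Since `Z` is strictly inside the triangle `ACB'`, the
ray from `B'` through `Z` leaves the triangle at a point `W` strictly inside the side `AC`.
Splitting both angles along this ray, the exterior angle theorem in the triangles `AB'Z` and
`CB'Z` gives `∠ A B' W < ∠ A Z W` and `∠ C B' W ≤ ∠ C Z W` (Euclid I.21).
-/

open EuclideanGeometry

noncomputable section

namespace EuclideanGeometry

variable {V P : Type*} [NormedAddCommGroup V] [InnerProductSpace ℝ V] [MetricSpace P]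
  [NormedAddTorsor V P]

theorem angle_eq_angle_add_angle_of_sbtw (x : P) {p q r : P} (h : Sbtw ℝ p q r) :
    ∠ x q r = ∠ x p r + ∠ p x q := by
  rw [exterior_angle_eq_angle_add_angle r h.symm, ← h.angle_eq_right x, angle_comm q x p]
  ring

theorem not_collinear_of_sbtw_of_sbtw {a c w z r : P} (hw : Sbtw ℝ a w c) (hz : Sbtw ℝ r z w)
    (h : ¬Collinear ℝ ({a, c, r} : Set P)) : ¬Collinear ℝ ({r, a, z} : Set P) := by
  intro hcol
  have ha : a ∈ line[ℝ, r, z] := hcol.mem_affineSpan_of_mem_of_ne (by simp) (by simp) (by simp)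
    hz.left_ne
  have hw' : w ∈ line[ℝ, r, z] := hz.right_mem_affineSpan
  have hc : c ∈ line[ℝ, r, z] :=
    affineSpan_pair_le_of_mem_of_mem ha hw' hw.right_mem_affineSpan
  exact h (collinear_triple_of_mem_affineSpan_pair ha hc (left_mem_affineSpan_pair ℝ r z))

theorem angle_lt_angle_of_sbtw_of_sbtw {a c w z r : P} (hw : Sbtw ℝ a w c) (hz : Sbtw ℝ r z w)
    (h : ¬Collinear ℝ ({a, c, r} : Set P)) : ∠ a r c < ∠ a z c := by
  have hpos : 0 < ∠ r a z := angle_pos_of_not_collinear (not_collinear_of_sbtw_of_sbtw hw hz h)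
  have ha : ∠ a z w = ∠ a r w + ∠ r a z := angle_eq_angle_add_angle_of_sbtw a hz
  have hc : ∠ c z w = ∠ c r w + ∠ r c z := angle_eq_angle_add_angle_of_sbtw c hz
  rw [← angle_add_angle_eq_of_sbtw (p := r) hw, ← angle_add_angle_eq_of_sbtw (p := z) hw,
    angle_comm w r c, angle_comm w z c]
  linarith [angle_nonneg r c z]

end EuclideanGeometry

theorem angle_add_sub_eq {V : Type*} [NormedAddCommGroup V] [InnerProductSpace ℝ V] (a b c : V) :
    ∠ a (a + c - b) c = ∠ a b c := by
  have h₁ : a - (a + c - b) = -(c - b) := by abel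
  have h₂ : c - (a + c - b) = -(a - b) := by abel
  simp only [EuclideanGeometry.angle, vsub_eq_sub, h₁, h₂, InnerProductGeometry.angle_neg_neg,
    InnerProductGeometry.angle_comm (c - b)]

section Barycentric

variable {E : Type*} [NormedAddCommGroup E] [NormedSpace ℝ E]

theorem not_collinear_of_interior_convexHull_nonempty (hE : 1 < Module.finrank ℝ E) {s : Set E}
    (h : (interior (convexHull ℝ s)).Nonempty) : ¬Collinear ℝ s := by
  have := Module.finite_of_finrank_pos (zero_lt_one.trans hE)
  intro hcol
  have hle := hcol.finrank_le_one
  rw [← direction_affineSpan, affineSpan_eq_top_of_nonempty_interior h,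
    AffineSubspace.direction_top, finrank_top] at hle
  omega

theorem exists_pos_weights_of_mem_interior_convexHull {a c r z : E}
    (hz : z ∈ interior (convexHull ℝ {a, c, r})) (h : ¬Collinear ℝ ({a, c, r} : Set E)) :
    ∃ α γ τ : ℝ, 0 < α ∧ 0 < γ ∧ 0 < τ ∧ α + γ + τ = 1 ∧ z = α • a + γ • c + τ • r := by
  have hrange : Set.range ![a, c, r] = {a, c, r} := by
    simp only [Matrix.range_cons, Matrix.range_empty, Set.union_empty, Set.singleton_union]
  let b : AffineBasis (Fin 3) ℝ E :=
    ⟨![a, c, r], affineIndependent_iff_not_collinear_set.2 h,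
      hrange ▸ affineSpan_eq_top_of_nonempty_interior ⟨z, hz⟩⟩
  have hpos : ∀ i, 0 < b.coord i z := by
    have hint := b.interior_convexHull
    rw [show ⇑b = ![a, c, r] from rfl, hrange] at hint
    rwa [hint] at hz
  have hsum : b.coord 0 z + b.coord 1 z + b.coord 2 z = 1 := by
    simpa only [Fin.sum_univ_three] using b.sum_coord_apply_eq_one z
  refine ⟨b.coord 0 z, b.coord 1 z, b.coord 2 z, hpos 0, hpos 1, hpos 2, hsum, ?_⟩
  have hcomb := b.affineCombination_coord_eq_self z
  rw [Finset.affineCombination_eq_linear_combination _ _ _ (by rwa [Fin.sum_univ_three]),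
    Fin.sum_univ_three] at hcomb
  exact hcomb.symm

end Barycentric

theorem exists_sbtw_sbtw_of_pos_weights {E : Type*} [AddCommGroup E] [Module ℝ E] {a c r : E}
    (h : ¬Collinear ℝ ({a, c, r} : Set E)) {α γ τ : ℝ} (hα : 0 < α) (hγ : 0 < γ) (hτ : 0 < τ)
    (hsum : α + γ + τ = 1) : ∃ w, Sbtw ℝ a w c ∧ Sbtw ℝ r (α • a + γ • c + τ • r) w := by
  set w := AffineMap.lineMap a c (γ / (α + γ)) with hw
  have hαγ : 0 < α + γ := by positivity
  refine ⟨w, sbtw_lineMap_iff.2 ⟨ne₁₂_of_not_collinear h, by positivity, ?_⟩, ?_⟩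
  · rw [div_lt_one hαγ]
    linarith
  have hrw : r ≠ w := by
    rintro rfl
    exact h (collinear_triple_of_mem_affineSpan_pair (left_mem_affineSpan_pair ℝ a c)
      (right_mem_affineSpan_pair ℝ a c) (AffineMap.lineMap_mem_affineSpan_pair _ a c))
  have hz : α • a + γ • c + τ • r = AffineMap.lineMap r w (α + γ) := by
    rw [AffineMap.lineMap_apply_module, hw, AffineMap.lineMap_apply_module, smul_add, smul_smul,
      smul_smul, mul_one_sub, mul_div_cancel₀ _ hαγ.ne', show 1 - (α + γ) = τ by linarith]
    module
  rw [hz]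
  exact sbtw_lineMap_iff.2 ⟨hrw, hαγ, by linarith⟩

theorem stmt_3_general (A B C Z : Plane)
    (hZ : Z ∈ interior (convexHull ℝ ({A, C, A + C - B} : Set Plane))) :
    ∠ A B C < ∠ A Z C := by
  have hncol : ¬Collinear ℝ ({A, C, A + C - B} : Set Plane) :=
    not_collinear_of_interior_convexHull_nonempty (by simp) ⟨Z, hZ⟩
  obtain ⟨α, γ, τ, hα, hγ, hτ, hsum, rfl⟩ :=
    exists_pos_weights_of_mem_interior_convexHull hZ hncol
  obtain ⟨W, hAWC, hB'ZW⟩ := exists_sbtw_sbtw_of_pos_weights hncol hα hγ hτ hsum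
  rw [← angle_add_sub_eq A B C]
  exact angle_lt_angle_of_sbtw_of_sbtw hAWC hB'ZW hncol

theorem stmt_3 (A B C Z : Plane)
    (hB : B ∉ affineSpan ℝ ({A, C} : Set Plane))
    (hZ : Z ∈ interior (convexHull ℝ ({A, C, A + C - B} : Set Plane))) :
    ∠ A B C < ∠ A Z C :=
  stmt_3_general A B C Z hZ
end
end

section
/- Let A, B, C be points in the plane with B not on line AC, let B₁ be the orthogonal projection of B onto line AC, and suppose C lies strictly between A and B₁. Let X be the midpoint of AB, Y the midpoint of BC, and Y' = 2X - Y. Then ACYY' is a parallelogram, and letting V be the midpoint of AY' and V₁ the projection of V onto line AC, we have dist(A, V₁) = (1/4)·dist(C, B₁). -/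
/-!
Since `Y' = A + (B - C)/2`, the midpoint `V` of `AY'` satisfies `V - A = (B - C)/4`. The feet of
the perpendiculars are the values of the orthogonal projection onto line `AC`, an affine map fixing
`A` and `C`; hence `V₁ - A = (B₁ - C)/4`.
-/

open EuclideanGeometry

noncomputable section

namespace EuclideanGeometry

variable {V P : Type*} [NormedAddCommGroup V] [InnerProductSpace ℝ V] [MetricSpace P]
  [NormedAddTorsor V P]

theorem coe_orthogonalProjection_line_eq_of_inner_eq_zero {A C p q : P}
    (hq : q ∈ line[ℝ, A, C]) (hpq : inner ℝ (p -ᵥ q) (C -ᵥ A) = 0) :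
    (orthogonalProjection line[ℝ, A, C] p : P) = q := by
  rw [coe_orthogonalProjection_eq_iff_mem, direction_affineSpan, vectorSpan_pair_rev,
    Submodule.mem_orthogonal_singleton_iff_inner_left]
  exact ⟨hq, hpq⟩

theorem orthogonalProjection_vsub_orthogonalProjection_of_vsub_eq_smul
    (s : AffineSubspace ℝ P) [Nonempty s] [s.direction.HasOrthogonalProjection]
    {p q r t : P} {k : ℝ} (h : p -ᵥ q = k • (r -ᵥ t)) :
    (orthogonalProjection s p : P) -ᵥ orthogonalProjection s q
      = k • ((orthogonalProjection s r : P) -ᵥ orthogonalProjection s t) := by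
  rw [← AffineSubspace.coe_vsub, ← AffineSubspace.coe_vsub, ← ContinuousAffineMap.coe_toAffineMap,
    ← AffineMap.linearMap_vsub, ← AffineMap.linearMap_vsub, h, map_smul, Submodule.coe_smul]

theorem dist_orthogonalProjection_eq_of_vsub_eq_smul
    (s : AffineSubspace ℝ P) [Nonempty s] [s.direction.HasOrthogonalProjection]
    {p q r t : P} {k : ℝ} (h : p -ᵥ q = k • (r -ᵥ t)) :
    dist (orthogonalProjection s p : P) (orthogonalProjection s q)
      = |k| * dist (orthogonalProjection s r : P) (orthogonalProjection s t) := by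
  rw [dist_eq_norm_vsub V, dist_eq_norm_vsub V,
    orthogonalProjection_vsub_orthogonalProjection_of_vsub_eq_smul s h, norm_smul,
    Real.norm_eq_abs]

end EuclideanGeometry

theorem stmt_6_general (A B C B₁ V₁ : Plane)
    (hB₁mem : B₁ ∈ affineSpan ℝ ({A, C} : Set Plane))
    (hB₁perp : inner ℝ (B - B₁) (C - A) = (0 : ℝ))
    (hV₁mem : V₁ ∈ affineSpan ℝ ({A, C} : Set Plane))
    (hV₁perp :
      inner ℝ (midpoint ℝ A ((2 : ℝ) • midpoint ℝ A B - midpoint ℝ B C) - V₁) (C - A) = (0 : ℝ)) :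
    (midpoint ℝ B C) - C = ((2 : ℝ) • midpoint ℝ A B - midpoint ℝ B C) - A ∧
      dist A V₁ = (1 / 4) * dist C B₁ := by
  refine ⟨by simp only [midpoint_eq_smul_add, invOf_eq_inv]; module, ?_⟩
  have hV : midpoint ℝ A ((2 : ℝ) • midpoint ℝ A B - midpoint ℝ B C) -ᵥ A
      = (1 / 4 : ℝ) • (B -ᵥ C) := by
    simp only [vsub_eq_sub, midpoint_eq_smul_add, invOf_eq_inv]; module
  have key := dist_orthogonalProjection_eq_of_vsub_eq_smul line[ℝ, A, C] hV
  rwa [coe_orthogonalProjection_line_eq_of_inner_eq_zero hV₁mem hV₁perp,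
    coe_orthogonalProjection_line_eq_of_inner_eq_zero hB₁mem hB₁perp,
    orthogonalProjection_eq_self_iff.2 (left_mem_affineSpan_pair ℝ A C),
    orthogonalProjection_eq_self_iff.2 (right_mem_affineSpan_pair ℝ A C),
    abs_of_pos (by norm_num), dist_comm, dist_comm B₁] at key

theorem stmt_6 (A B C B₁ V₁ : Plane)
    (hB : B ∉ affineSpan ℝ ({A, C} : Set Plane))
    (hB₁mem : B₁ ∈ affineSpan ℝ ({A, C} : Set Plane))
    (hB₁perp : inner ℝ (B - B₁) (C - A) = (0 : ℝ))
    (hbtw : Sbtw ℝ A C B₁)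
    (hV₁mem : V₁ ∈ affineSpan ℝ ({A, C} : Set Plane))
    (hV₁perp :
      inner ℝ (midpoint ℝ A ((2 : ℝ) • midpoint ℝ A B - midpoint ℝ B C) - V₁) (C - A) = (0 : ℝ)) :
    (midpoint ℝ B C) - C = ((2 : ℝ) • midpoint ℝ A B - midpoint ℝ B C) - A ∧
      dist A V₁ = (1 / 4) * dist C B₁ :=
  stmt_6_general A B C B₁ V₁ hB₁mem hB₁perp hV₁mem hV₁perp
end
end

section
/- Let A, B, C be points in the plane forming a nondegenerate triangle, and let B₁ be the projection of B onto line AC with C strictly between A and B₁ and dist(C, B₁) ≤ 4·dist(A, C). With X the midpoint of AB, Y the midpoint of BC, Y' = 2X - Y, V the midpoint of AY', and W the midpoint of CY: the projection V₁ of V onto line AC lies on segment AC, and the projection W₂ of W onto line Y'Y lies on segment Y'Y. -/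
/-!
Write `d = C - A`. Then `Y - Y' = d`, while `V - A = Y - W = (B - C)/4` and
`C - V = W - Y' = d - (B - C)/4`. The foot of the perpendicular from `R` to the line `PP'` lies
on the segment `PP'` as soon as `R - P` and `P' - R` both have nonnegative inner product with
`P' - P`, so both claims reduce to `0 ≤ ⟪B - C, d⟫ ≤ 4‖d‖²`. As `B - B₁ ⊥ d`, this inner product
equals `⟪B₁ - C, d⟫`, which is nonnegative because `C` lies between `A` and `B₁`, and is at most
`‖B₁ - C‖ ‖d‖ ≤ 4‖d‖²` by Cauchy–Schwarz.
-/

open EuclideanGeometry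

noncomputable section

open scoped RealInnerProductSpace

section InnerProductSpace

variable {E : Type*} [NormedAddCommGroup E] [InnerProductSpace ℝ E]

theorem mem_segment_of_mem_affineSpan_pair_of_inner_eq_zero {P P' Q R : E}
    (hQ : Q ∈ line[ℝ, P, P']) (hperp : ⟪R - Q, P' - P⟫ = 0)
    (hP : 0 ≤ ⟪R - P, P' - P⟫) (hP' : 0 ≤ ⟪P' - R, P' - P⟫) :
    Q ∈ segment ℝ P P' := by
  obtain ⟨r, rfl⟩ := mem_affineSpan_pair_iff_exists_lineMap_eq.mp hQ
  rw [segment_eq_image_lineMap]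
  rcases eq_or_ne P P' with rfl | hne
  · exact ⟨0, ⟨le_rfl, zero_le_one⟩, by simp⟩
  have hd : 0 < ⟪P' - P, P' - P⟫ := real_inner_self_pos.mpr (sub_ne_zero.mpr hne.symm)
  have hfoot : ⟪R - P, P' - P⟫ = r * ⟪P' - P, P' - P⟫ := by
    rw [AffineMap.lineMap_apply_module', sub_add_eq_sub_sub_swap, inner_sub_left,
      real_inner_smul_left] at hperp
    linarith
  have hP'foot : ⟪P' - R, P' - P⟫ = (1 - r) * ⟪P' - P, P' - P⟫ := by
    rw [← sub_sub_sub_cancel_right P' R P, inner_sub_left, hfoot]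
    ring
  refine ⟨r, ⟨?_, ?_⟩, rfl⟩ <;> nlinarith

theorem Wbtw.inner_sub_nonneg {x y z : E} (h : Wbtw ℝ x y z) : 0 ≤ ⟪z - y, y - x⟫ := by
  obtain ⟨r, ⟨hr0, hr1⟩, rfl⟩ := h
  have hx : AffineMap.lineMap x z r - x = r • (z - x) := by
    rw [AffineMap.lineMap_apply_module']; abel
  have hz : z - AffineMap.lineMap x z r = (1 - r) • (z - x) := by
    rw [AffineMap.lineMap_apply_module']; module
  rw [hx, hz, real_inner_smul_left, real_inner_smul_right]
  exact mul_nonneg (sub_nonneg.mpr hr1) (mul_nonneg hr0 real_inner_self_nonneg)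

end InnerProductSpace

section Midpoints

variable {V : Type*} [AddCommGroup V] [Module ℝ V] (A B C : V)

theorem midpoint_sub_two_smul_midpoint_sub_midpoint :
    midpoint ℝ B C - ((2 : ℝ) • midpoint ℝ A B - midpoint ℝ B C) = C - A := by
  simp only [midpoint_eq_smul_add, invOf_eq_inv]; module

theorem midpoint_two_smul_midpoint_sub_midpoint_sub_left :
    midpoint ℝ A ((2 : ℝ) • midpoint ℝ A B - midpoint ℝ B C) - A = (4⁻¹ : ℝ) • (B - C) := by
  simp only [midpoint_eq_smul_add, invOf_eq_inv]; module

theorem sub_midpoint_two_smul_midpoint_sub_midpoint :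
    C - midpoint ℝ A ((2 : ℝ) • midpoint ℝ A B - midpoint ℝ B C) =
      (C - A) - (4⁻¹ : ℝ) • (B - C) := by
  simp only [midpoint_eq_smul_add, invOf_eq_inv]; module

theorem midpoint_midpoint_sub_two_smul_midpoint_sub_midpoint :
    midpoint ℝ C (midpoint ℝ B C) - ((2 : ℝ) • midpoint ℝ A B - midpoint ℝ B C) =
      (C - A) - (4⁻¹ : ℝ) • (B - C) := by
  simp only [midpoint_eq_smul_add, invOf_eq_inv]; module

theorem midpoint_sub_midpoint_midpoint :
    midpoint ℝ B C - midpoint ℝ C (midpoint ℝ B C) = (4⁻¹ : ℝ) • (B - C) := by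
  simp only [midpoint_eq_smul_add, invOf_eq_inv]; module

end Midpoints

theorem stmt_7_general (A B C B₁ V₁ W₂ : Plane)
    (hB₁perp : inner ℝ (B - B₁) (C - A) = (0 : ℝ))
    (hbtw : Sbtw ℝ A C B₁)
    (hlen : dist C B₁ ≤ 4 * dist A C)
    -- abbreviations: X = midpoint A B, Y = midpoint B C, Y' = 2X - Y,
    -- V = midpoint A Y', W = midpoint C Y
    (hV₁mem : V₁ ∈ affineSpan ℝ ({A, C} : Set Plane))
    (hV₁perp :
      inner ℝ (midpoint ℝ A ((2 : ℝ) • midpoint ℝ A B - midpoint ℝ B C) - V₁) (C - A) = (0 : ℝ))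
    (hW₂mem : W₂ ∈ affineSpan ℝ
      ({(2 : ℝ) • midpoint ℝ A B - midpoint ℝ B C, midpoint ℝ B C} : Set Plane))
    (hW₂perp :
      inner ℝ (midpoint ℝ C (midpoint ℝ B C) - W₂)
        (midpoint ℝ B C - ((2 : ℝ) • midpoint ℝ A B - midpoint ℝ B C)) = (0 : ℝ)) :
    V₁ ∈ segment ℝ A C ∧
      W₂ ∈ segment ℝ ((2 : ℝ) • midpoint ℝ A B - midpoint ℝ B C) (midpoint ℝ B C) := by
  have hfoot : ⟪B - C, C - A⟫ = ⟪B₁ - C, C - A⟫ := by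
    rw [← sub_add_sub_cancel B B₁ C, inner_add_left, hB₁perp, zero_add]
  have hnonneg : 0 ≤ ⟪B - C, C - A⟫ := hfoot ▸ hbtw.wbtw.inner_sub_nonneg
  have hle : ⟪B - C, C - A⟫ ≤ 4 * ⟪C - A, C - A⟫ := calc
    ⟪B - C, C - A⟫ ≤ ‖B₁ - C‖ * ‖C - A‖ := hfoot ▸ real_inner_le_norm _ _
    _ ≤ 4 * ‖C - A‖ * ‖C - A‖ := by
      rw [← dist_eq_norm, ← dist_eq_norm_sub', dist_comm]
      gcongr
    _ = 4 * ⟪C - A, C - A⟫ := by rw [real_inner_self_eq_norm_mul_norm, mul_assoc]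
  have hquarter : 0 ≤ ⟪(4⁻¹ : ℝ) • (B - C), C - A⟫ := by
    rw [real_inner_smul_left]; positivity
  have hrest : 0 ≤ ⟪(C - A) - (4⁻¹ : ℝ) • (B - C), C - A⟫ := by
    rw [inner_sub_left, real_inner_smul_left]; linarith
  constructor
  · refine mem_segment_of_mem_affineSpan_pair_of_inner_eq_zero hV₁mem hV₁perp ?_ ?_
    · rwa [midpoint_two_smul_midpoint_sub_midpoint_sub_left]
    · rwa [sub_midpoint_two_smul_midpoint_sub_midpoint]
  · refine mem_segment_of_mem_affineSpan_pair_of_inner_eq_zero hW₂mem hW₂perp ?_ ?_ <;>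
      rw [midpoint_sub_two_smul_midpoint_sub_midpoint]
    · rwa [midpoint_midpoint_sub_two_smul_midpoint_sub_midpoint]
    · rwa [midpoint_sub_midpoint_midpoint]

theorem stmt_7 (A B C B₁ V₁ W₂ : Plane)
    (hB : B ∉ affineSpan ℝ ({A, C} : Set Plane))
    (hB₁mem : B₁ ∈ affineSpan ℝ ({A, C} : Set Plane))
    (hB₁perp : inner ℝ (B - B₁) (C - A) = (0 : ℝ))
    (hbtw : Sbtw ℝ A C B₁)
    (hlen : dist C B₁ ≤ 4 * dist A C)
    -- abbreviations: X = midpoint A B, Y = midpoint B C, Y' = 2X - Y,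
    -- V = midpoint A Y', W = midpoint C Y
    (hV₁mem : V₁ ∈ affineSpan ℝ ({A, C} : Set Plane))
    (hV₁perp :
      inner ℝ (midpoint ℝ A ((2 : ℝ) • midpoint ℝ A B - midpoint ℝ B C) - V₁) (C - A) = (0 : ℝ))
    (hW₂mem : W₂ ∈ affineSpan ℝ
      ({(2 : ℝ) • midpoint ℝ A B - midpoint ℝ B C, midpoint ℝ B C} : Set Plane))
    (hW₂perp :
      inner ℝ (midpoint ℝ C (midpoint ℝ B C) - W₂)
        (midpoint ℝ B C - ((2 : ℝ) • midpoint ℝ A B - midpoint ℝ B C)) = (0 : ℝ)) :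
    V₁ ∈ segment ℝ A C ∧
      W₂ ∈ segment ℝ ((2 : ℝ) • midpoint ℝ A B - midpoint ℝ B C) (midpoint ℝ B C) :=
  stmt_7_general A B C B₁ V₁ W₂ hB₁perp hbtw hlen hV₁mem hV₁perp hW₂mem hW₂perp
end
end

section
/- Let A, B, C be a nondegenerate triangle in the plane, X the midpoint of AB, Y the midpoint of BC, and O the orthogonal projection of B onto line XY. Suppose O lies between X and Y. Then the union of triangle XBO rotated 180° about X, triangle YBO rotated 180° about Y, and the quadrilateral AXYC below line XY is a rectangle with base AC and area equal to that of triangle ABC. -/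
open EuclideanGeometry MeasureTheory

noncomputable section

lemma mem_hull3 {a b c p : Plane} {α β γ : ℝ} (ha : 0 ≤ α) (hb : 0 ≤ β) (hc : 0 ≤ γ)
    (hs : α + β + γ = 1) (hp : α • a + β • b + γ • c = p) :
    p ∈ convexHull ℝ ({a, b, c} : Set Plane) := by
  have h := Finset.centerMass_mem_convexHull (Finset.univ : Finset (Fin 3))
    (w := ![α, β, γ]) (z := ![a, b, c]) (s := ({a, b, c} : Set Plane))
    (by intro i _; fin_cases i <;> simpa)
    (by simp [Fin.sum_univ_three, hs])
    (by intro i _; fin_cases i <;> simp)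
  simp only [Finset.centerMass, Fin.sum_univ_three, Matrix.cons_val_zero, Matrix.cons_val_one,
    Matrix.head_cons, Matrix.cons_val_two, Matrix.tail_cons, hs, inv_one, one_smul] at h
  rwa [hp] at h

lemma mem_hull4 {a b c d p : Plane} {α β γ δ : ℝ} (ha : 0 ≤ α) (hb : 0 ≤ β) (hc : 0 ≤ γ)
    (hd : 0 ≤ δ) (hs : α + β + γ + δ = 1) (hp : α • a + β • b + γ • c + δ • d = p) :
    p ∈ convexHull ℝ ({a, b, c, d} : Set Plane) := by
  have h := Finset.centerMass_mem_convexHull (Finset.univ : Finset (Fin 4))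
    (w := ![α, β, γ, δ]) (z := ![a, b, c, d]) (s := ({a, b, c, d} : Set Plane))
    (by intro i _; fin_cases i <;> simpa)
    (by simp [Fin.sum_univ_four, hs])
    (by intro i _; fin_cases i <;> simp)
  simp only [Finset.centerMass, Fin.sum_univ_four, Matrix.cons_val_zero, Matrix.cons_val_one,
    Matrix.head_cons, Matrix.cons_val_two, Matrix.tail_cons, Matrix.cons_val_three, hs, inv_one,
    one_smul] at h
  rwa [hp] at h

lemma hull3_coeff {a b c : Plane} {p : Plane} (hp : p ∈ convexHull ℝ ({a, b, c} : Set Plane)) :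
    ∃ α β γ : ℝ, 0 ≤ α ∧ 0 ≤ β ∧ 0 ≤ γ ∧ α + β + γ = 1 ∧ p = α • a + β • b + γ • c := by
  have hsub : convexHull ℝ ({a, b, c} : Set Plane) ⊆
      {p : Plane | ∃ α β γ : ℝ, 0 ≤ α ∧ 0 ≤ β ∧ 0 ≤ γ ∧ α + β + γ = 1 ∧
        p = α • a + β • b + γ • c} := by
    apply convexHull_min
    · rintro p hp
      simp only [Set.mem_insert_iff, Set.mem_singleton_iff] at hp
      rcases hp with rfl | rfl | rfl
      · exact ⟨1, 0, 0, by norm_num, by norm_num, by norm_num, by norm_num, by module⟩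
      · exact ⟨0, 1, 0, by norm_num, by norm_num, by norm_num, by norm_num, by module⟩
      · exact ⟨0, 0, 1, by norm_num, by norm_num, by norm_num, by norm_num, by module⟩
    · rintro x ⟨α1, β1, γ1, h1, h2, h3, h4, h5⟩ y ⟨α2, β2, γ2, g1, g2, g3, g4, g5⟩ s r hs hr hsr
      refine ⟨s * α1 + r * α2, s * β1 + r * β2, s * γ1 + r * γ2, by positivity, by positivity,
        by positivity, by nlinarith, ?_⟩
      rw [h5, g5]; module
  exact hsub hp

lemma hull4_coeff {a b c d : Plane} {p : Plane}
    (hp : p ∈ convexHull ℝ ({a, b, c, d} : Set Plane)) :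
    ∃ α β γ δ : ℝ, 0 ≤ α ∧ 0 ≤ β ∧ 0 ≤ γ ∧ 0 ≤ δ ∧ α + β + γ + δ = 1 ∧
      p = α • a + β • b + γ • c + δ • d := by
  have hsub : convexHull ℝ ({a, b, c, d} : Set Plane) ⊆
      {p : Plane | ∃ α β γ δ : ℝ, 0 ≤ α ∧ 0 ≤ β ∧ 0 ≤ γ ∧ 0 ≤ δ ∧ α + β + γ + δ = 1 ∧
        p = α • a + β • b + γ • c + δ • d} := by
    apply convexHull_min
    · rintro p hp
      simp only [Set.mem_insert_iff, Set.mem_singleton_iff] at hp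
      rcases hp with rfl | rfl | rfl | rfl
      · exact ⟨1, 0, 0, 0, by norm_num, by norm_num, by norm_num, by norm_num, by norm_num,
          by module⟩
      · exact ⟨0, 1, 0, 0, by norm_num, by norm_num, by norm_num, by norm_num, by norm_num,
          by module⟩
      · exact ⟨0, 0, 1, 0, by norm_num, by norm_num, by norm_num, by norm_num, by norm_num,
          by module⟩
      · exact ⟨0, 0, 0, 1, by norm_num, by norm_num, by norm_num, by norm_num, by norm_num,
          by module⟩
    · rintro x ⟨α1, β1, γ1, δ1, h1, h2, h3, h4, h5, h6⟩
        y ⟨α2, β2, γ2, δ2, g1, g2, g3, g4, g5, g6⟩ s r hs hr hsr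
      refine ⟨s * α1 + r * α2, s * β1 + r * β2, s * γ1 + r * γ2, s * δ1 + r * δ2, by positivity,
        by positivity, by positivity, by positivity, by nlinarith, ?_⟩
      rw [h6, g6]; module
  exact hsub hp

lemma hyperplane_null (z : Plane) (hz : z ≠ 0) (c : ℝ) :
    volume {p : Plane | inner ℝ p z = (c : ℝ)} = 0 := by
  have horth : ((ℝ ∙ z)ᗮ : Submodule ℝ Plane) ≠ ⊤ := by
    intro h
    have : z ∈ ((ℝ ∙ z)ᗮ : Submodule ℝ Plane) := h ▸ Submodule.mem_top
    have hzz := this z (Submodule.mem_span_singleton_self z)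
    exact hz (inner_self_eq_zero.mp hzz)
  set p0 : Plane := (c / (inner ℝ z z : ℝ)) • z with hp0
  have hzz : (inner ℝ z z : ℝ) ≠ 0 := fun h => hz (inner_self_eq_zero.mp h)
  have key : ∀ p : Plane, (inner ℝ z (-p0 + p) : ℝ) = (inner ℝ p z : ℝ) - c := by
    intro p
    rw [inner_add_right, inner_neg_right, hp0, real_inner_smul_right, real_inner_comm z p,
      div_mul_cancel₀ _ hzz]
    ring
  have hset : {p : Plane | inner ℝ p z = (c : ℝ)} =
      (fun x => -p0 + x) ⁻¹' ((ℝ ∙ z)ᗮ : Submodule ℝ Plane) := by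
    ext p
    simp only [Set.mem_setOf_eq, Set.mem_preimage, SetLike.mem_coe,
      Submodule.mem_orthogonal_singleton_iff_inner_right, key p]
    constructor
    · intro h; rw [h]; ring
    · intro h; linarith
  rw [hset, measure_preimage_add]
  exact Measure.addHaar_submodule volume _ horth

lemma hull_le {z : Plane} {c : ℝ} {s : Set Plane} (h : ∀ p ∈ s, (inner ℝ p z : ℝ) ≤ c) :
    convexHull ℝ s ⊆ {p : Plane | (inner ℝ p z : ℝ) ≤ c} :=
  convexHull_min h (convex_halfSpace_le ⟨fun x y => inner_add_left x y z,
    fun r x => real_inner_smul_left x z r⟩ c)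

lemma hull_ge {z : Plane} {c : ℝ} {s : Set Plane} (h : ∀ p ∈ s, c ≤ (inner ℝ p z : ℝ)) :
    convexHull ℝ s ⊆ {p : Plane | c ≤ (inner ℝ p z : ℝ)} :=
  convexHull_min h (convex_halfSpace_ge ⟨fun x y => inner_add_left x y z,
    fun r x => real_inner_smul_left x z r⟩ c)

lemma null_of_sep {S T : Set Plane} {z : Plane} (hz : z ≠ 0) {c : ℝ}
    (hS : S ⊆ {p : Plane | (inner ℝ p z : ℝ) ≤ c}) (hT : T ⊆ {p : Plane | c ≤ (inner ℝ p z : ℝ)}) :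
    volume (S ∩ T) = 0 := by
  refine measure_mono_null ?_ (hyperplane_null z hz c)
  rintro p ⟨hp, hq⟩
  exact le_antisymm (hS hp) (hT hq)

lemma vol3 {S1 S2 S3 : Set Plane} (h1 : Convex ℝ S1) (h2 : Convex ℝ S2) (h3 : Convex ℝ S3)
    (h12 : volume (S1 ∩ S2) = 0) (h13 : volume (S1 ∩ S3) = 0) (h23 : volume (S2 ∩ S3) = 0) :
    volume (S1 ∪ S2 ∪ S3) = volume S1 + volume S2 + volume S3 := by
  have hA : volume ((S1 ∪ S2) ∩ S3) = 0 := by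
    rw [Set.union_inter_distrib_right]; exact measure_union_null h13 h23
  rw [measure_union₀ (h3.nullMeasurableSet volume) hA,
    measure_union₀ (h2.nullMeasurableSet volume) h12]
lemma mem_Q {A e v : Plane} {t u w : ℝ} (hw0 : 0 ≤ w) (hw1 : w ≤ 1)
    (h1 : w * t ≤ 2 * u) (h2 : 2 * u ≤ 2 - w * (1 - t)) :
    A + u • e + w • v ∈ convexHull ℝ
      ({A, A + v + (t / 2) • e, A + v + ((t + 1) / 2) • e, A + e} : Set Plane) := by
  rcases le_or_gt (2 * (u - w * t / 2)) w with hm | hm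
  · refine mem_hull4 (α := 1 - w) (β := w - 2 * (u - w * t / 2)) (γ := 2 * (u - w * t / 2))
      (δ := 0) (by linarith) (by linarith) (by linarith) le_rfl (by ring) ?_
    match_scalars <;> ring
  · refine mem_hull4 (α := 1 - w / 2 - (u - w * t / 2)) (β := 0) (γ := w)
      (δ := (u - w * t / 2) - w / 2) (by nlinarith) le_rfl hw0 (by linarith) (by ring) ?_
    match_scalars <;> ring

lemma tiling1 {A e v : Plane} {t : ℝ} (ht0 : 0 ≤ t) (ht1 : t ≤ 1) :
    convexHull ℝ ({A + v + (t / 2) • e, A, A + v} : Set Plane) ∪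
        convexHull ℝ ({A + v + ((t + 1) / 2) • e, A + e, A + e + v} : Set Plane) ∪
        convexHull ℝ ({A, A + v + (t / 2) • e, A + v + ((t + 1) / 2) • e, A + e} : Set Plane) =
      convexHull ℝ ({A, A + e, A + v, A + e + v} : Set Plane) := by
  apply Set.Subset.antisymm
  · refine Set.union_subset (Set.union_subset ?_ ?_) ?_ <;>
      refine convexHull_min ?_ (convex_convexHull ℝ _) <;>
      intro p hp <;>
      simp only [Set.mem_insert_iff, Set.mem_singleton_iff] at hp
    · rcases hp with rfl | rfl | rfl
      · exact mem_hull4 (α := 0) (β := 0) (γ := 1 - t / 2) (δ := t / 2) le_rfl le_rfl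
          (by linarith) (by linarith) (by ring) (by match_scalars <;> ring)
      · exact mem_hull4 (α := 1) (β := 0) (γ := 0) (δ := 0) (by norm_num) le_rfl le_rfl le_rfl
          (by ring) (by match_scalars <;> ring)
      · exact mem_hull4 (α := 0) (β := 0) (γ := 1) (δ := 0) le_rfl le_rfl (by norm_num) le_rfl
          (by ring) (by match_scalars <;> ring)
    · rcases hp with rfl | rfl | rfl
      · exact mem_hull4 (α := 0) (β := 0) (γ := (1 - t) / 2) (δ := (1 + t) / 2) le_rfl le_rfl
          (by linarith) (by linarith) (by ring) (by match_scalars <;> ring)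
      · exact mem_hull4 (α := 0) (β := 1) (γ := 0) (δ := 0) le_rfl (by norm_num) le_rfl le_rfl
          (by ring) (by match_scalars <;> ring)
      · exact mem_hull4 (α := 0) (β := 0) (γ := 0) (δ := 1) le_rfl le_rfl le_rfl (by norm_num)
          (by ring) (by match_scalars <;> ring)
    · rcases hp with rfl | rfl | rfl | rfl
      · exact mem_hull4 (α := 1) (β := 0) (γ := 0) (δ := 0) (by norm_num) le_rfl le_rfl le_rfl
          (by ring) (by match_scalars <;> ring)
      · exact mem_hull4 (α := 0) (β := 0) (γ := 1 - t / 2) (δ := t / 2) le_rfl le_rfl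
          (by linarith) (by linarith) (by ring) (by match_scalars <;> ring)
      · exact mem_hull4 (α := 0) (β := 0) (γ := (1 - t) / 2) (δ := (1 + t) / 2) le_rfl le_rfl
          (by linarith) (by linarith) (by ring) (by match_scalars <;> ring)
      · exact mem_hull4 (α := 0) (β := 1) (γ := 0) (δ := 0) le_rfl (by norm_num) le_rfl le_rfl
          (by ring) (by match_scalars <;> ring)
  · intro p hp
    obtain ⟨a, b, c, d, ha, hb, hc, hd, hsum, hpeq⟩ := hull4_coeff hp
    have hp2 : p = A + (b + d) • e + (c + d) • v := by
      rw [hpeq]; match_scalars <;> linarith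
    set u : ℝ := b + d with hu
    set w : ℝ := c + d with hw
    have hu0 : 0 ≤ u := by positivity
    have hu1 : u ≤ 1 := by linarith
    have hw0 : 0 ≤ w := by positivity
    have hw1 : w ≤ 1 := by linarith
    rw [hp2]
    by_cases hc1 : 2 * u ≤ w * t
    · left; left
      rcases eq_or_lt_of_le ht0 with htz | htz
      · have huz : u = 0 := by nlinarith
        exact mem_hull3 (α := 0) (β := 1 - w) (γ := w) le_rfl (by linarith) hw0 (by ring)
          (by match_scalars <;> simp [huz] <;> ring)
      · refine mem_hull3 (α := 2 * u / t) (β := 1 - w) (γ := w - 2 * u / t)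
          (by positivity) (by linarith) ?_ (by ring) ?_
        · rw [sub_nonneg, div_le_iff₀ htz]; linarith
        · match_scalars <;> field_simp <;> ring_nf
    · by_cases hc2 : 2 * (1 - u) ≤ w * (1 - t)
      · left; right
        rcases eq_or_lt_of_le ht1 with htz | htz
        · have huz : u = 1 := by nlinarith
          exact mem_hull3 (α := 0) (β := 1 - w) (γ := w) le_rfl (by linarith) hw0 (by ring)
            (by match_scalars <;> simp [huz] <;> ring)
        · have h1t : (0:ℝ) < 1 - t := by linarith
          refine mem_hull3 (α := 2 * (1 - u) / (1 - t)) (β := 1 - w)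
            (γ := w - 2 * (1 - u) / (1 - t)) (div_nonneg (by linarith) (by linarith)) (by linarith) ?_ (by ring) ?_
          · rw [sub_nonneg, div_le_iff₀ h1t]; linarith
          · match_scalars <;> field_simp <;> ring_nf
      · right
        exact mem_Q hw0 hw1 (by linarith) (by nlinarith)
lemma tiling2 {A e v : Plane} {t : ℝ} (ht0 : 0 ≤ t) (ht1 : t ≤ 1) :
    convexHull ℝ ({A + v + (t / 2) • e, A + (2:ℝ) • v + t • e, A + v + t • e} : Set Plane) ∪
        convexHull ℝ
          ({A + v + ((t + 1) / 2) • e, A + (2:ℝ) • v + t • e, A + v + t • e} : Set Plane) ∪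
        convexHull ℝ ({A, A + v + (t / 2) • e, A + v + ((t + 1) / 2) • e, A + e} : Set Plane) =
      convexHull ℝ ({A, A + (2:ℝ) • v + t • e, A + e} : Set Plane) := by
  apply Set.Subset.antisymm
  · refine Set.union_subset (Set.union_subset ?_ ?_) ?_ <;>
      refine convexHull_min ?_ (convex_convexHull ℝ _) <;>
      intro p hp <;>
      simp only [Set.mem_insert_iff, Set.mem_singleton_iff] at hp
    · rcases hp with rfl | rfl | rfl
      · exact mem_hull3 (α := 1/2) (β := 1/2) (γ := 0) (by norm_num) (by norm_num) le_rfl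
          (by ring) (by match_scalars <;> ring)
      · exact mem_hull3 (α := 0) (β := 1) (γ := 0) le_rfl (by norm_num) le_rfl
          (by ring) (by match_scalars <;> ring)
      · exact mem_hull3 (α := (1 - t)/2) (β := 1/2) (γ := t/2) (by linarith) (by norm_num)
          (by linarith) (by ring) (by match_scalars <;> ring)
    · rcases hp with rfl | rfl | rfl
      · exact mem_hull3 (α := 0) (β := 1/2) (γ := 1/2) le_rfl (by norm_num) (by norm_num)
          (by ring) (by match_scalars <;> ring)
      · exact mem_hull3 (α := 0) (β := 1) (γ := 0) le_rfl (by norm_num) le_rfl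
          (by ring) (by match_scalars <;> ring)
      · exact mem_hull3 (α := (1 - t)/2) (β := 1/2) (γ := t/2) (by linarith) (by norm_num)
          (by linarith) (by ring) (by match_scalars <;> ring)
    · rcases hp with rfl | rfl | rfl | rfl
      · exact mem_hull3 (α := 1) (β := 0) (γ := 0) (by norm_num) le_rfl le_rfl
          (by ring) (by match_scalars <;> ring)
      · exact mem_hull3 (α := 1/2) (β := 1/2) (γ := 0) (by norm_num) (by norm_num) le_rfl
          (by ring) (by match_scalars <;> ring)
      · exact mem_hull3 (α := 0) (β := 1/2) (γ := 1/2) le_rfl (by norm_num) (by norm_num)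
          (by ring) (by match_scalars <;> ring)
      · exact mem_hull3 (α := 0) (β := 0) (γ := 1) le_rfl le_rfl (by norm_num)
          (by ring) (by match_scalars <;> ring)
  · intro p hp
    obtain ⟨a, b, c, ha, hb, hc, hsum, hpeq⟩ := hull3_coeff hp
    have hp2 : p = A + (b * t + c) • e + (2 * b) • v := by
      rw [hpeq]; match_scalars <;> linarith [hsum]
    set u : ℝ := b * t + c with hu
    set w : ℝ := 2 * b with hw
    have hu0 : 0 ≤ u := by positivity
    have hw0 : 0 ≤ w := by positivity
    have hw2 : w ≤ 2 := by linarith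
    have hul : w * t ≤ 2 * u := by nlinarith
    have huu : 2 * u ≤ 2 - w * (1 - t) := by nlinarith
    rw [hp2]
    rcases le_or_gt w 1 with hwle | hwgt
    · right
      exact mem_Q hw0 hwle hul huu
    · rcases le_or_gt u t with hut | hut
      · left; left
        rcases eq_or_lt_of_le ht0 with htz | htz
        · have huz : u = 0 := le_antisymm (htz ▸ hut) hu0
          exact mem_hull3 (α := 2 - w) (β := w - 1) (γ := 0) (by linarith) (by linarith) le_rfl
            (by ring) (by match_scalars <;> simp [huz, ← htz] <;> ring)
        · refine mem_hull3 (α := 2 * (t - u) / t) (β := w - 1) (γ := 2 - w - 2 * (t - u) / t)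
            (div_nonneg (by linarith) (by linarith)) (by linarith) ?_ (by ring) ?_
          · have : 2 * (t - u) / t ≤ 2 - w := by
              rw [div_le_iff₀ htz]; nlinarith
            linarith
          · match_scalars <;> field_simp <;> ring_nf
      · left; right
        rcases eq_or_lt_of_le ht1 with htz | htz
        · exfalso; nlinarith
        · have h1t : (0:ℝ) < 1 - t := by linarith
          refine mem_hull3 (α := 2 * (u - t) / (1 - t)) (β := w - 1)
            (γ := 2 - w - 2 * (u - t) / (1 - t))
            (div_nonneg (by linarith) (by linarith)) (by linarith) ?_ (by ring) ?_
          · have : 2 * (u - t) / (1 - t) ≤ 2 - w := by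
              rw [div_le_iff₀ h1t]; nlinarith
            linarith
          · match_scalars <;> field_simp <;> ring_nf
lemma image_reflect_hull (P : Plane) (s : Set Plane) :
    (fun x => (2:ℝ) • P - x) '' convexHull ℝ s =
      convexHull ℝ ((fun x => (2:ℝ) • P - x) '' s) := by
  have hmap : (fun x : Plane => (2:ℝ) • P - x) = ⇑(AffineMap.homothety P (-1:ℝ)) := by
    funext x; rw [AffineMap.homothety_apply]
    simp only [vsub_eq_sub, vadd_eq_add]; module
  rw [hmap, AffineMap.image_convexHull]

lemma volume_reflect (P : Plane) (s : Set Plane) :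
    volume ((fun x => (2:ℝ) • P - x) '' s) = volume s := by
  have h1 : (fun x : Plane => (2:ℝ) • P - x) '' s = (fun x : Plane => (2:ℝ) • P - x) ⁻¹' s := by
    ext y; constructor
    · rintro ⟨x, hx, rfl⟩; simpa using hx
    · intro hy; exact ⟨(2:ℝ) • P - y, hy, by module⟩
  have h2 : (fun x : Plane => (2:ℝ) • P - x) = (fun z : Plane => (2:ℝ) • P + z) ∘ Neg.neg := by
    funext x; simp [sub_eq_add_neg]
  rw [h1, h2, Set.preimage_comp, Measure.measure_preimage_neg, measure_preimage_add]

set_option maxHeartbeats 1000000 in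
lemma vol_main {A e v : Plane} {t : ℝ} (ht0 : 0 ≤ t) (ht1 : t ≤ 1)
    (hve : (inner ℝ v e : ℝ) = 0) (hev : (inner ℝ e v : ℝ) = 0)
    (he0 : e ≠ 0) (hv0 : v ≠ 0) :
    volume (convexHull ℝ ({A, A + e, A + v, A + e + v} : Set Plane)) =
      volume (convexHull ℝ ({A, A + (2:ℝ) • v + t • e, A + e} : Set Plane)) := by
  have hEp : (0:ℝ) < (inner ℝ e e : ℝ) :=
    lt_of_le_of_ne real_inner_self_nonneg (Ne.symm (inner_self_ne_zero.mpr he0))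
  have hVp : (0:ℝ) < (inner ℝ v v : ℝ) :=
    lt_of_le_of_ne real_inner_self_nonneg (Ne.symm (inner_self_ne_zero.mpr hv0))
  have hinner : ∀ (α β a b : ℝ) (q : Plane), q = A + α • e + β • v →
      (inner ℝ q (a • e + b • v) : ℝ) =
        a * (inner ℝ A e : ℝ) + b * (inner ℝ A v : ℝ) + α * a * (inner ℝ e e : ℝ) + β * b * (inner ℝ v v : ℝ) := by
    rintro α β a b q rfl
    simp only [inner_add_left, inner_add_right, real_inner_smul_left, real_inner_smul_right,
      hev, hve]
    ring
  have hzeA : ∀ a b : ℝ, a ≠ 0 → (a • e + b • v : Plane) ≠ 0 := by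
    intro a b ha h
    have h2 : (inner ℝ (a • e + b • v) e : ℝ) = a * (inner ℝ e e : ℝ) := by
      simp only [inner_add_left, real_inner_smul_left, hve]; ring
    rw [h, inner_zero_left] at h2
    exact (mul_ne_zero ha (ne_of_gt hEp)) h2.symm
  have hzeB : ∀ a b : ℝ, b ≠ 0 → (a • e + b • v : Plane) ≠ 0 := by
    intro a b hb h
    have h2 : (inner ℝ (a • e + b • v) v : ℝ) = b * (inner ℝ v v : ℝ) := by
      simp only [inner_add_left, real_inner_smul_left, hev]; ring
    rw [h, inner_zero_left] at h2
    exact (mul_ne_zero hb (ne_of_gt hVp)) h2.symm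
  have h2t : (0:ℝ) ≤ 2 - t := by linarith
  have h1t : (0:ℝ) ≤ 1 - t := by linarith
  -- separations
  have hsep1a : convexHull ℝ (({A + v + (t/2) • e, A, A + v}) : Set Plane) ⊆
      {p : Plane | (inner ℝ p ((2 * (inner ℝ v v : ℝ)) • e + (-(t * (inner ℝ e e : ℝ))) • v) : ℝ) ≤ (2 * (inner ℝ v v : ℝ)) * (inner ℝ A e : ℝ) + (-(t * (inner ℝ e e : ℝ))) * (inner ℝ A v : ℝ)} := by
    apply hull_le
    intro p hp
    simp only [Set.mem_insert_iff, Set.mem_singleton_iff] at hp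
    rcases hp with h | h | h
    · rw [h, hinner (t/2) 1 _ _ (A + v + (t/2) • e) (by module)]
      nlinarith [mul_pos hEp hVp, mul_nonneg (mul_nonneg ht0 hEp.le) hVp.le, mul_nonneg (mul_nonneg h1t hEp.le) hVp.le, mul_nonneg (mul_nonneg h2t hEp.le) hVp.le, mul_nonneg ht0 hEp.le, mul_nonneg h1t hEp.le, hEp.le, hVp.le]
    · rw [h, hinner 0 0 _ _ (A) (by module)]
      nlinarith [mul_pos hEp hVp, mul_nonneg (mul_nonneg ht0 hEp.le) hVp.le, mul_nonneg (mul_nonneg h1t hEp.le) hVp.le, mul_nonneg (mul_nonneg h2t hEp.le) hVp.le, mul_nonneg ht0 hEp.le, mul_nonneg h1t hEp.le, hEp.le, hVp.le]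
    · rw [h, hinner 0 1 _ _ (A + v) (by module)]
      nlinarith [mul_pos hEp hVp, mul_nonneg (mul_nonneg ht0 hEp.le) hVp.le, mul_nonneg (mul_nonneg h1t hEp.le) hVp.le, mul_nonneg (mul_nonneg h2t hEp.le) hVp.le, mul_nonneg ht0 hEp.le, mul_nonneg h1t hEp.le, hEp.le, hVp.le]
  have hsep1b : convexHull ℝ (({A, A + v + (t/2) • e, A + v + ((t+1)/2) • e, A + e}) : Set Plane) ⊆
      {p : Plane | (2 * (inner ℝ v v : ℝ)) * (inner ℝ A e : ℝ) + (-(t * (inner ℝ e e : ℝ))) * (inner ℝ A v : ℝ) ≤ (inner ℝ p ((2 * (inner ℝ v v : ℝ)) • e + (-(t * (inner ℝ e e : ℝ))) • v) : ℝ)} := by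
    apply hull_ge
    intro p hp
    simp only [Set.mem_insert_iff, Set.mem_singleton_iff] at hp
    rcases hp with h | h | h | h
    · rw [h, hinner 0 0 _ _ (A) (by module)]
      nlinarith [mul_pos hEp hVp, mul_nonneg (mul_nonneg ht0 hEp.le) hVp.le, mul_nonneg (mul_nonneg h1t hEp.le) hVp.le, mul_nonneg (mul_nonneg h2t hEp.le) hVp.le, mul_nonneg ht0 hEp.le, mul_nonneg h1t hEp.le, hEp.le, hVp.le]
    · rw [h, hinner (t/2) 1 _ _ (A + v + (t/2) • e) (by module)]
      nlinarith [mul_pos hEp hVp, mul_nonneg (mul_nonneg ht0 hEp.le) hVp.le, mul_nonneg (mul_nonneg h1t hEp.le) hVp.le, mul_nonneg (mul_nonneg h2t hEp.le) hVp.le, mul_nonneg ht0 hEp.le, mul_nonneg h1t hEp.le, hEp.le, hVp.le]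
    · rw [h, hinner ((t+1)/2) 1 _ _ (A + v + ((t+1)/2) • e) (by module)]
      nlinarith [mul_pos hEp hVp, mul_nonneg (mul_nonneg ht0 hEp.le) hVp.le, mul_nonneg (mul_nonneg h1t hEp.le) hVp.le, mul_nonneg (mul_nonneg h2t hEp.le) hVp.le, mul_nonneg ht0 hEp.le, mul_nonneg h1t hEp.le, hEp.le, hVp.le]
    · rw [h, hinner 1 0 _ _ (A + e) (by module)]
      nlinarith [mul_pos hEp hVp, mul_nonneg (mul_nonneg ht0 hEp.le) hVp.le, mul_nonneg (mul_nonneg h1t hEp.le) hVp.le, mul_nonneg (mul_nonneg h2t hEp.le) hVp.le, mul_nonneg ht0 hEp.le, mul_nonneg h1t hEp.le, hEp.le, hVp.le]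
  have hsep1c : convexHull ℝ (({A + v + ((t+1)/2) • e, A + e, A + e + v}) : Set Plane) ⊆
      {p : Plane | (2 * (inner ℝ v v : ℝ)) * (inner ℝ A e : ℝ) + (-(t * (inner ℝ e e : ℝ))) * (inner ℝ A v : ℝ) ≤ (inner ℝ p ((2 * (inner ℝ v v : ℝ)) • e + (-(t * (inner ℝ e e : ℝ))) • v) : ℝ)} := by
    apply hull_ge
    intro p hp
    simp only [Set.mem_insert_iff, Set.mem_singleton_iff] at hp
    rcases hp with h | h | h
    · rw [h, hinner ((t+1)/2) 1 _ _ (A + v + ((t+1)/2) • e) (by module)]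
      nlinarith [mul_pos hEp hVp, mul_nonneg (mul_nonneg ht0 hEp.le) hVp.le, mul_nonneg (mul_nonneg h1t hEp.le) hVp.le, mul_nonneg (mul_nonneg h2t hEp.le) hVp.le, mul_nonneg ht0 hEp.le, mul_nonneg h1t hEp.le, hEp.le, hVp.le]
    · rw [h, hinner 1 0 _ _ (A + e) (by module)]
      nlinarith [mul_pos hEp hVp, mul_nonneg (mul_nonneg ht0 hEp.le) hVp.le, mul_nonneg (mul_nonneg h1t hEp.le) hVp.le, mul_nonneg (mul_nonneg h2t hEp.le) hVp.le, mul_nonneg ht0 hEp.le, mul_nonneg h1t hEp.le, hEp.le, hVp.le]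
    · rw [h, hinner 1 1 _ _ (A + e + v) (by module)]
      nlinarith [mul_pos hEp hVp, mul_nonneg (mul_nonneg ht0 hEp.le) hVp.le, mul_nonneg (mul_nonneg h1t hEp.le) hVp.le, mul_nonneg (mul_nonneg h2t hEp.le) hVp.le, mul_nonneg ht0 hEp.le, mul_nonneg h1t hEp.le, hEp.le, hVp.le]
  have hsep2a : convexHull ℝ (({A + v + ((t+1)/2) • e, A + e, A + e + v}) : Set Plane) ⊆
      {p : Plane | (2 * (inner ℝ v v : ℝ)) * (inner ℝ A e : ℝ) + ((1-t) * (inner ℝ e e : ℝ)) * (inner ℝ A v : ℝ) + 2 * (inner ℝ v v : ℝ) * (inner ℝ e e : ℝ) ≤ (inner ℝ p ((2 * (inner ℝ v v : ℝ)) • e + ((1-t) * (inner ℝ e e : ℝ)) • v) : ℝ)} := by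
    apply hull_ge
    intro p hp
    simp only [Set.mem_insert_iff, Set.mem_singleton_iff] at hp
    rcases hp with h | h | h
    · rw [h, hinner ((t+1)/2) 1 _ _ (A + v + ((t+1)/2) • e) (by module)]
      nlinarith [mul_pos hEp hVp, mul_nonneg (mul_nonneg ht0 hEp.le) hVp.le, mul_nonneg (mul_nonneg h1t hEp.le) hVp.le, mul_nonneg (mul_nonneg h2t hEp.le) hVp.le, mul_nonneg ht0 hEp.le, mul_nonneg h1t hEp.le, hEp.le, hVp.le]
    · rw [h, hinner 1 0 _ _ (A + e) (by module)]
      nlinarith [mul_pos hEp hVp, mul_nonneg (mul_nonneg ht0 hEp.le) hVp.le, mul_nonneg (mul_nonneg h1t hEp.le) hVp.le, mul_nonneg (mul_nonneg h2t hEp.le) hVp.le, mul_nonneg ht0 hEp.le, mul_nonneg h1t hEp.le, hEp.le, hVp.le]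
    · rw [h, hinner 1 1 _ _ (A + e + v) (by module)]
      nlinarith [mul_pos hEp hVp, mul_nonneg (mul_nonneg ht0 hEp.le) hVp.le, mul_nonneg (mul_nonneg h1t hEp.le) hVp.le, mul_nonneg (mul_nonneg h2t hEp.le) hVp.le, mul_nonneg ht0 hEp.le, mul_nonneg h1t hEp.le, hEp.le, hVp.le]
  have hsep2b : convexHull ℝ (({A, A + v + (t/2) • e, A + v + ((t+1)/2) • e, A + e}) : Set Plane) ⊆
      {p : Plane | (inner ℝ p ((2 * (inner ℝ v v : ℝ)) • e + ((1-t) * (inner ℝ e e : ℝ)) • v) : ℝ) ≤ (2 * (inner ℝ v v : ℝ)) * (inner ℝ A e : ℝ) + ((1-t) * (inner ℝ e e : ℝ)) * (inner ℝ A v : ℝ) + 2 * (inner ℝ v v : ℝ) * (inner ℝ e e : ℝ)} := by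
    apply hull_le
    intro p hp
    simp only [Set.mem_insert_iff, Set.mem_singleton_iff] at hp
    rcases hp with h | h | h | h
    · rw [h, hinner 0 0 _ _ (A) (by module)]
      nlinarith [mul_pos hEp hVp, mul_nonneg (mul_nonneg ht0 hEp.le) hVp.le, mul_nonneg (mul_nonneg h1t hEp.le) hVp.le, mul_nonneg (mul_nonneg h2t hEp.le) hVp.le, mul_nonneg ht0 hEp.le, mul_nonneg h1t hEp.le, hEp.le, hVp.le]
    · rw [h, hinner (t/2) 1 _ _ (A + v + (t/2) • e) (by module)]
      nlinarith [mul_pos hEp hVp, mul_nonneg (mul_nonneg ht0 hEp.le) hVp.le, mul_nonneg (mul_nonneg h1t hEp.le) hVp.le, mul_nonneg (mul_nonneg h2t hEp.le) hVp.le, mul_nonneg ht0 hEp.le, mul_nonneg h1t hEp.le, hEp.le, hVp.le]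
    · rw [h, hinner ((t+1)/2) 1 _ _ (A + v + ((t+1)/2) • e) (by module)]
      nlinarith [mul_pos hEp hVp, mul_nonneg (mul_nonneg ht0 hEp.le) hVp.le, mul_nonneg (mul_nonneg h1t hEp.le) hVp.le, mul_nonneg (mul_nonneg h2t hEp.le) hVp.le, mul_nonneg ht0 hEp.le, mul_nonneg h1t hEp.le, hEp.le, hVp.le]
    · rw [h, hinner 1 0 _ _ (A + e) (by module)]
      nlinarith [mul_pos hEp hVp, mul_nonneg (mul_nonneg ht0 hEp.le) hVp.le, mul_nonneg (mul_nonneg h1t hEp.le) hVp.le, mul_nonneg (mul_nonneg h2t hEp.le) hVp.le, mul_nonneg ht0 hEp.le, mul_nonneg h1t hEp.le, hEp.le, hVp.le]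
  have hsep3a : convexHull ℝ (({A + v + (t/2) • e, A + (2:ℝ) • v + t • e, A + v + t • e}) : Set Plane) ⊆
      {p : Plane | (0:ℝ) * (inner ℝ A e : ℝ) + 1 * (inner ℝ A v : ℝ) + (inner ℝ v v : ℝ) ≤ (inner ℝ p ((0:ℝ) • e + (1:ℝ) • v) : ℝ)} := by
    apply hull_ge
    intro p hp
    simp only [Set.mem_insert_iff, Set.mem_singleton_iff] at hp
    rcases hp with h | h | h
    · rw [h, hinner (t/2) 1 _ _ (A + v + (t/2) • e) (by module)]
      nlinarith [mul_pos hEp hVp, mul_nonneg (mul_nonneg ht0 hEp.le) hVp.le, mul_nonneg (mul_nonneg h1t hEp.le) hVp.le, mul_nonneg (mul_nonneg h2t hEp.le) hVp.le, mul_nonneg ht0 hEp.le, mul_nonneg h1t hEp.le, hEp.le, hVp.le]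
    · rw [h, hinner t 2 _ _ (A + (2:ℝ) • v + t • e) (by module)]
      nlinarith [mul_pos hEp hVp, mul_nonneg (mul_nonneg ht0 hEp.le) hVp.le, mul_nonneg (mul_nonneg h1t hEp.le) hVp.le, mul_nonneg (mul_nonneg h2t hEp.le) hVp.le, mul_nonneg ht0 hEp.le, mul_nonneg h1t hEp.le, hEp.le, hVp.le]
    · rw [h, hinner t 1 _ _ (A + v + t • e) (by module)]
      nlinarith [mul_pos hEp hVp, mul_nonneg (mul_nonneg ht0 hEp.le) hVp.le, mul_nonneg (mul_nonneg h1t hEp.le) hVp.le, mul_nonneg (mul_nonneg h2t hEp.le) hVp.le, mul_nonneg ht0 hEp.le, mul_nonneg h1t hEp.le, hEp.le, hVp.le]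
  have hsep3b : convexHull ℝ (({A + v + ((t+1)/2) • e, A + (2:ℝ) • v + t • e, A + v + t • e}) : Set Plane) ⊆
      {p : Plane | (0:ℝ) * (inner ℝ A e : ℝ) + 1 * (inner ℝ A v : ℝ) + (inner ℝ v v : ℝ) ≤ (inner ℝ p ((0:ℝ) • e + (1:ℝ) • v) : ℝ)} := by
    apply hull_ge
    intro p hp
    simp only [Set.mem_insert_iff, Set.mem_singleton_iff] at hp
    rcases hp with h | h | h
    · rw [h, hinner ((t+1)/2) 1 _ _ (A + v + ((t+1)/2) • e) (by module)]
      nlinarith [mul_pos hEp hVp, mul_nonneg (mul_nonneg ht0 hEp.le) hVp.le, mul_nonneg (mul_nonneg h1t hEp.le) hVp.le, mul_nonneg (mul_nonneg h2t hEp.le) hVp.le, mul_nonneg ht0 hEp.le, mul_nonneg h1t hEp.le, hEp.le, hVp.le]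
    · rw [h, hinner t 2 _ _ (A + (2:ℝ) • v + t • e) (by module)]
      nlinarith [mul_pos hEp hVp, mul_nonneg (mul_nonneg ht0 hEp.le) hVp.le, mul_nonneg (mul_nonneg h1t hEp.le) hVp.le, mul_nonneg (mul_nonneg h2t hEp.le) hVp.le, mul_nonneg ht0 hEp.le, mul_nonneg h1t hEp.le, hEp.le, hVp.le]
    · rw [h, hinner t 1 _ _ (A + v + t • e) (by module)]
      nlinarith [mul_pos hEp hVp, mul_nonneg (mul_nonneg ht0 hEp.le) hVp.le, mul_nonneg (mul_nonneg h1t hEp.le) hVp.le, mul_nonneg (mul_nonneg h2t hEp.le) hVp.le, mul_nonneg ht0 hEp.le, mul_nonneg h1t hEp.le, hEp.le, hVp.le]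
  have hsep3c : convexHull ℝ (({A, A + v + (t/2) • e, A + v + ((t+1)/2) • e, A + e}) : Set Plane) ⊆
      {p : Plane | (inner ℝ p ((0:ℝ) • e + (1:ℝ) • v) : ℝ) ≤ (0:ℝ) * (inner ℝ A e : ℝ) + 1 * (inner ℝ A v : ℝ) + (inner ℝ v v : ℝ)} := by
    apply hull_le
    intro p hp
    simp only [Set.mem_insert_iff, Set.mem_singleton_iff] at hp
    rcases hp with h | h | h | h
    · rw [h, hinner 0 0 _ _ (A) (by module)]
      nlinarith [mul_pos hEp hVp, mul_nonneg (mul_nonneg ht0 hEp.le) hVp.le, mul_nonneg (mul_nonneg h1t hEp.le) hVp.le, mul_nonneg (mul_nonneg h2t hEp.le) hVp.le, mul_nonneg ht0 hEp.le, mul_nonneg h1t hEp.le, hEp.le, hVp.le]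
    · rw [h, hinner (t/2) 1 _ _ (A + v + (t/2) • e) (by module)]
      nlinarith [mul_pos hEp hVp, mul_nonneg (mul_nonneg ht0 hEp.le) hVp.le, mul_nonneg (mul_nonneg h1t hEp.le) hVp.le, mul_nonneg (mul_nonneg h2t hEp.le) hVp.le, mul_nonneg ht0 hEp.le, mul_nonneg h1t hEp.le, hEp.le, hVp.le]
    · rw [h, hinner ((t+1)/2) 1 _ _ (A + v + ((t+1)/2) • e) (by module)]
      nlinarith [mul_pos hEp hVp, mul_nonneg (mul_nonneg ht0 hEp.le) hVp.le, mul_nonneg (mul_nonneg h1t hEp.le) hVp.le, mul_nonneg (mul_nonneg h2t hEp.le) hVp.le, mul_nonneg ht0 hEp.le, mul_nonneg h1t hEp.le, hEp.le, hVp.le]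
    · rw [h, hinner 1 0 _ _ (A + e) (by module)]
      nlinarith [mul_pos hEp hVp, mul_nonneg (mul_nonneg ht0 hEp.le) hVp.le, mul_nonneg (mul_nonneg h1t hEp.le) hVp.le, mul_nonneg (mul_nonneg h2t hEp.le) hVp.le, mul_nonneg ht0 hEp.le, mul_nonneg h1t hEp.le, hEp.le, hVp.le]
  have hsep4a : convexHull ℝ (({A + v + (t/2) • e, A + (2:ℝ) • v + t • e, A + v + t • e}) : Set Plane) ⊆
      {p : Plane | (inner ℝ p ((1:ℝ) • e + (0:ℝ) • v) : ℝ) ≤ 1 * (inner ℝ A e : ℝ) + (0:ℝ) * (inner ℝ A v : ℝ) + t * (inner ℝ e e : ℝ)} := by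
    apply hull_le
    intro p hp
    simp only [Set.mem_insert_iff, Set.mem_singleton_iff] at hp
    rcases hp with h | h | h
    · rw [h, hinner (t/2) 1 _ _ (A + v + (t/2) • e) (by module)]
      nlinarith [mul_pos hEp hVp, mul_nonneg (mul_nonneg ht0 hEp.le) hVp.le, mul_nonneg (mul_nonneg h1t hEp.le) hVp.le, mul_nonneg (mul_nonneg h2t hEp.le) hVp.le, mul_nonneg ht0 hEp.le, mul_nonneg h1t hEp.le, hEp.le, hVp.le]
    · rw [h, hinner t 2 _ _ (A + (2:ℝ) • v + t • e) (by module)]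
      nlinarith [mul_pos hEp hVp, mul_nonneg (mul_nonneg ht0 hEp.le) hVp.le, mul_nonneg (mul_nonneg h1t hEp.le) hVp.le, mul_nonneg (mul_nonneg h2t hEp.le) hVp.le, mul_nonneg ht0 hEp.le, mul_nonneg h1t hEp.le, hEp.le, hVp.le]
    · rw [h, hinner t 1 _ _ (A + v + t • e) (by module)]
      nlinarith [mul_pos hEp hVp, mul_nonneg (mul_nonneg ht0 hEp.le) hVp.le, mul_nonneg (mul_nonneg h1t hEp.le) hVp.le, mul_nonneg (mul_nonneg h2t hEp.le) hVp.le, mul_nonneg ht0 hEp.le, mul_nonneg h1t hEp.le, hEp.le, hVp.le]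
  have hsep4b : convexHull ℝ (({A + v + ((t+1)/2) • e, A + (2:ℝ) • v + t • e, A + v + t • e}) : Set Plane) ⊆
      {p : Plane | 1 * (inner ℝ A e : ℝ) + (0:ℝ) * (inner ℝ A v : ℝ) + t * (inner ℝ e e : ℝ) ≤ (inner ℝ p ((1:ℝ) • e + (0:ℝ) • v) : ℝ)} := by
    apply hull_ge
    intro p hp
    simp only [Set.mem_insert_iff, Set.mem_singleton_iff] at hp
    rcases hp with h | h | h
    · rw [h, hinner ((t+1)/2) 1 _ _ (A + v + ((t+1)/2) • e) (by module)]
      nlinarith [mul_pos hEp hVp, mul_nonneg (mul_nonneg ht0 hEp.le) hVp.le, mul_nonneg (mul_nonneg h1t hEp.le) hVp.le, mul_nonneg (mul_nonneg h2t hEp.le) hVp.le, mul_nonneg ht0 hEp.le, mul_nonneg h1t hEp.le, hEp.le, hVp.le]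
    · rw [h, hinner t 2 _ _ (A + (2:ℝ) • v + t • e) (by module)]
      nlinarith [mul_pos hEp hVp, mul_nonneg (mul_nonneg ht0 hEp.le) hVp.le, mul_nonneg (mul_nonneg h1t hEp.le) hVp.le, mul_nonneg (mul_nonneg h2t hEp.le) hVp.le, mul_nonneg ht0 hEp.le, mul_nonneg h1t hEp.le, hEp.le, hVp.le]
    · rw [h, hinner t 1 _ _ (A + v + t • e) (by module)]
      nlinarith [mul_pos hEp hVp, mul_nonneg (mul_nonneg ht0 hEp.le) hVp.le, mul_nonneg (mul_nonneg h1t hEp.le) hVp.le, mul_nonneg (mul_nonneg h2t hEp.le) hVp.le, mul_nonneg ht0 hEp.le, mul_nonneg h1t hEp.le, hEp.le, hVp.le]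
  -- nonzeroness of the separating vectors
  have hz1 : ((2 * (inner ℝ v v : ℝ)) • e + (-(t * (inner ℝ e e : ℝ))) • v : Plane) ≠ 0 :=
    hzeA _ _ (mul_ne_zero two_ne_zero (ne_of_gt hVp))
  have hz2 : ((2 * (inner ℝ v v : ℝ)) • e + ((1-t) * (inner ℝ e e : ℝ)) • v : Plane) ≠ 0 :=
    hzeA _ _ (mul_ne_zero two_ne_zero (ne_of_gt hVp))
  have hz3 : (((0:ℝ)) • e + ((1:ℝ)) • v : Plane) ≠ 0 := hzeB _ _ one_ne_zero
  have hz4 : (((1:ℝ)) • e + ((0:ℝ)) • v : Plane) ≠ 0 := hzeA _ _ one_ne_zero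
  -- image computations for the reflected triangles
  have him1 : (fun x => (2:ℝ) • (A + v + (t/2) • e) - x) '' convexHull ℝ
        ({A + v + (t/2) • e, A + (2:ℝ) • v + t • e, A + v + t • e} : Set Plane) =
      convexHull ℝ ({A + v + (t/2) • e, A, A + v} : Set Plane) := by
    rw [image_reflect_hull, Set.image_insert_eq, Set.image_insert_eq, Set.image_singleton]
    rw [show (2:ℝ) • (A + v + (t/2) • e) - (A + v + (t/2) • e) = A + v + (t/2) • e by module,
      show (2:ℝ) • (A + v + (t/2) • e) - (A + (2:ℝ) • v + t • e) = A by module,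
      show (2:ℝ) • (A + v + (t/2) • e) - (A + v + t • e) = A + v by module]
  have him2 : (fun x => (2:ℝ) • (A + v + ((t+1)/2) • e) - x) '' convexHull ℝ
        ({A + v + ((t+1)/2) • e, A + (2:ℝ) • v + t • e, A + v + t • e} : Set Plane) =
      convexHull ℝ ({A + v + ((t+1)/2) • e, A + e, A + e + v} : Set Plane) := by
    rw [image_reflect_hull, Set.image_insert_eq, Set.image_insert_eq, Set.image_singleton]
    rw [show (2:ℝ) • (A + v + ((t+1)/2) • e) - (A + v + ((t+1)/2) • e) =
          A + v + ((t+1)/2) • e by module,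
      show (2:ℝ) • (A + v + ((t+1)/2) • e) - (A + (2:ℝ) • v + t • e) = A + e by module,
      show (2:ℝ) • (A + v + ((t+1)/2) • e) - (A + v + t • e) = A + e + v by module]
  calc volume (convexHull ℝ ({A, A + e, A + v, A + e + v} : Set Plane))
      = volume (convexHull ℝ ({A + v + (t/2) • e, A, A + v} : Set Plane) ∪
          convexHull ℝ ({A + v + ((t+1)/2) • e, A + e, A + e + v} : Set Plane) ∪
          convexHull ℝ
            ({A, A + v + (t/2) • e, A + v + ((t+1)/2) • e, A + e} : Set Plane)) := by
        rw [tiling1 ht0 ht1]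
    _ = volume (convexHull ℝ ({A + v + (t/2) • e, A, A + v} : Set Plane)) +
        volume (convexHull ℝ ({A + v + ((t+1)/2) • e, A + e, A + e + v} : Set Plane)) +
        volume (convexHull ℝ
          ({A, A + v + (t/2) • e, A + v + ((t+1)/2) • e, A + e} : Set Plane)) := by
        refine vol3 (convex_convexHull ℝ _) (convex_convexHull ℝ _) (convex_convexHull ℝ _)
          (null_of_sep hz1 hsep1a hsep1c) (null_of_sep hz1 hsep1a hsep1b) ?_
        rw [Set.inter_comm]
        exact null_of_sep hz2 hsep2b hsep2a
    _ = volume (convexHull ℝ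
          ({A + v + (t/2) • e, A + (2:ℝ) • v + t • e, A + v + t • e} : Set Plane)) +
        volume (convexHull ℝ
          ({A + v + ((t+1)/2) • e, A + (2:ℝ) • v + t • e, A + v + t • e} : Set Plane)) +
        volume (convexHull ℝ
          ({A, A + v + (t/2) • e, A + v + ((t+1)/2) • e, A + e} : Set Plane)) := by
        rw [← him1, ← him2, volume_reflect, volume_reflect]
    _ = volume (convexHull ℝ
          ({A + v + (t/2) • e, A + (2:ℝ) • v + t • e, A + v + t • e} : Set Plane) ∪
        convexHull ℝ
          ({A + v + ((t+1)/2) • e, A + (2:ℝ) • v + t • e, A + v + t • e} : Set Plane) ∪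
        convexHull ℝ
          ({A, A + v + (t/2) • e, A + v + ((t+1)/2) • e, A + e} : Set Plane)) := by
        refine (vol3 (convex_convexHull ℝ _) (convex_convexHull ℝ _)
          (convex_convexHull ℝ _) (null_of_sep hz4 hsep4a hsep4b) ?_ ?_).symm
        · rw [Set.inter_comm]; exact null_of_sep hz3 hsep3c hsep3a
        · rw [Set.inter_comm]; exact null_of_sep hz3 hsep3c hsep3b
    _ = volume (convexHull ℝ ({A, A + (2:ℝ) • v + t • e, A + e} : Set Plane)) := by
        rw [tiling2 ht0 ht1]


theorem stmt_13 (A B C O : Plane)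
    (hB : B ∉ affineSpan ℝ ({A, C} : Set Plane))
    (hOmem : O ∈ affineSpan ℝ ({midpoint ℝ A B, midpoint ℝ B C} : Set Plane))
    (hOperp : inner ℝ (B - O) (midpoint ℝ B C - midpoint ℝ A B) = (0 : ℝ))
    (hbtw : Wbtw ℝ (midpoint ℝ A B) O (midpoint ℝ B C)) :
    ((fun x => (2 : ℝ) • midpoint ℝ A B - x) ''
          convexHull ℝ ({midpoint ℝ A B, B, O} : Set Plane)) ∪
        ((fun x => (2 : ℝ) • midpoint ℝ B C - x) ''
          convexHull ℝ ({midpoint ℝ B C, B, O} : Set Plane)) ∪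
        convexHull ℝ ({A, midpoint ℝ A B, midpoint ℝ B C, C} : Set Plane) =
      convexHull ℝ
        ({A, C, (2 : ℝ) • midpoint ℝ A B - O, (2 : ℝ) • midpoint ℝ B C - O} : Set Plane) ∧
    inner ℝ (((2 : ℝ) • midpoint ℝ A B - O) - A) (C - A) = (0 : ℝ) ∧
    ((2 : ℝ) • midpoint ℝ B C - O) - C = ((2 : ℝ) • midpoint ℝ A B - O) - A ∧
    volume (convexHull ℝ
        ({A, C, (2 : ℝ) • midpoint ℝ A B - O, (2 : ℝ) • midpoint ℝ B C - O} : Set Plane)) =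
      volume (convexHull ℝ ({A, B, C} : Set Plane)) := by
  obtain ⟨t, ht, hOl⟩ := hbtw
  obtain ⟨ht0, ht1⟩ := ht
  simp only [AffineMap.lineMap_apply, vsub_eq_sub, vadd_eq_add] at hOl
  have hm1 : midpoint ℝ A B = (2⁻¹:ℝ) • (A + B) := by
    rw [midpoint_eq_smul_add, invOf_eq_inv]
  have hm2 : midpoint ℝ B C = (2⁻¹:ℝ) • (B + C) := by
    rw [midpoint_eq_smul_add, invOf_eq_inv]
  rw [hm1, hm2] at hOl
  set e : Plane := C - A with he
  set v : Plane := B - O with hv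
  have hO2 : O = A + v + t • e := by
    rw [he, hv]
    linear_combination (norm := module) (-2:ℝ) • hOl
  have hB2 : B = A + (2:ℝ) • v + t • e := by
    linear_combination (norm := module) hO2 - hv
  have hX2 : midpoint ℝ A B = A + v + (t/2) • e := by
    rw [hm1]; linear_combination (norm := module) (2⁻¹:ℝ) • hB2
  have hY2 : midpoint ℝ B C = A + v + ((t+1)/2) • e := by
    rw [hm2]; linear_combination (norm := module) (2⁻¹:ℝ) • hB2 - (2⁻¹:ℝ) • he
  have hC2 : C = A + e := by rw [he]; module
  have hrx : (2:ℝ) • midpoint ℝ A B - O = A + v := by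
    rw [hX2]; linear_combination (norm := module) (-1:ℝ) • hO2
  have hry : (2:ℝ) • midpoint ℝ B C - O = A + e + v := by
    rw [hY2]; linear_combination (norm := module) (-1:ℝ) • hO2
  have hv0 : v ≠ 0 := by
    intro h
    apply hB
    have hBlin : B = AffineMap.lineMap A C t := by
      rw [AffineMap.lineMap_apply]
      simp only [vsub_eq_sub, vadd_eq_add]
      linear_combination (norm := module) hB2 + (2:ℝ) • h + t • he
    rw [hBlin]
    exact AffineMap.lineMap_mem_affineSpan_pair t A C
  have hYX : midpoint ℝ B C - midpoint ℝ A B = (2⁻¹:ℝ) • e := by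
    rw [hX2, hY2]; module
  rw [hYX] at hOperp
  have hve : (inner ℝ v e : ℝ) = 0 := by
    rw [real_inner_smul_right] at hOperp
    linarith
  have hev : (inner ℝ e v : ℝ) = 0 := by rw [real_inner_comm]; exact hve
  -- rewrite the goal in canonical form
  rw [hrx, hry, hX2, hY2, hB2, hO2, hC2]
  refine ⟨?_, ?_, ?_, ?_⟩
  · rw [image_reflect_hull, image_reflect_hull, Set.image_insert_eq, Set.image_insert_eq,
      Set.image_singleton, Set.image_insert_eq, Set.image_insert_eq, Set.image_singleton]
    rw [show (2:ℝ) • (A + v + (t/2) • e) - (A + v + (t/2) • e) = A + v + (t/2) • e by module,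
      show (2:ℝ) • (A + v + (t/2) • e) - (A + (2:ℝ) • v + t • e) = A by module,
      show (2:ℝ) • (A + v + (t/2) • e) - (A + v + t • e) = A + v by module,
      show (2:ℝ) • (A + v + ((t+1)/2) • e) - (A + v + ((t+1)/2) • e) = A + v + ((t+1)/2) • e
        by module,
      show (2:ℝ) • (A + v + ((t+1)/2) • e) - (A + (2:ℝ) • v + t • e) = A + e by module,
      show (2:ℝ) • (A + v + ((t+1)/2) • e) - (A + v + t • e) = A + e + v by module]
    exact tiling1 ht0 ht1
  · rw [show A + v - A = v by module]
    exact hve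
  · module
  · -- volume equality
    by_cases he0 : e = 0
    · -- degenerate case: everything lies on a line
      obtain ⟨zv, hzmem, hzne⟩ : ∃ z ∈ ((ℝ ∙ v)ᗮ : Submodule ℝ Plane), z ≠ 0 := by
        apply Submodule.exists_mem_ne_zero_of_ne_bot
        intro hbot
        have htop : (ℝ ∙ v : Submodule ℝ Plane) = ⊤ := Submodule.orthogonal_eq_bot_iff.mp hbot
        have h1 : Module.finrank ℝ (ℝ ∙ v : Submodule ℝ Plane) = 1 := finrank_span_singleton hv0
        rw [htop] at h1
        have h2 : Module.finrank ℝ (⊤ : Submodule ℝ Plane) = 2 := by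
          rw [finrank_top]; exact finrank_euclideanSpace_fin
        omega
      have hzv : (inner ℝ v zv : ℝ) = 0 :=
        (Submodule.mem_orthogonal_singleton_iff_inner_right).mp hzmem
      have hsub : ∀ s : Set Plane, (∀ p ∈ s, (inner ℝ p zv : ℝ) = inner ℝ A zv) →
          volume (convexHull ℝ s) = 0 := by
        intro s hs
        exact measure_mono_null (convexHull_min hs (convex_hyperplane
          ⟨fun x y => inner_add_left x y zv, fun r x => real_inner_smul_left x zv r⟩ _))
          (hyperplane_null zv hzne _)
      have hq : ∀ (α β : ℝ) (q : Plane), q = A + α • e + β • v →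
          (inner ℝ q zv : ℝ) = inner ℝ A zv := by
        rintro α β q rfl
        rw [he0]
        simp only [smul_zero, add_zero, inner_add_left, real_inner_smul_left, hzv, mul_zero]
      rw [hsub _ ?_, hsub _ ?_]
      · intro p hp
        simp only [Set.mem_insert_iff, Set.mem_singleton_iff] at hp
        rcases hp with h | h | h
        · rw [h]
        · rw [h]; exact hq t 2 _ (by module)
        · rw [h]; exact hq 1 0 _ (by module)
      · intro p hp
        simp only [Set.mem_insert_iff, Set.mem_singleton_iff] at hp
        rcases hp with h | h | h | h
        · rw [h]
        · rw [h]; exact hq 1 0 _ (by module)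
        · rw [h]; exact hq 0 1 _ (by module)
        · rw [h]; exact hq 1 1 _ (by module)
    · exact vol_main ht0 ht1 hve hev he0 hv0
end
end
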